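/- A distribution (p_n, n ≥ 0) on the nonnegative integers with 0 < p_0 < 1 is geometrically infinitely divisible if and only if the sequence (a_n, n ≥ 0) determined by the recursion p_{n+1} = Σ_{k=0}^n p_k a_{n-k} for n ≥ 0 is nonnegative; in that case Σ_{n=0}^∞ a_n < ∞. -/

import Mathlib

open MeasureTheory Real Set

noncomputable section

/-- Convolution of two pmfs on ℕ. -/
def seqConv (f g : ℕ → ℝ) : ℕ → ℝ := fun n => ∑ k ∈ Finset.range (n + 1), f k * g (n - k)

/-- k-fold convolution power of a pmf on ℕ. -/
def seqConvPow (f : ℕ → ℝ) : ℕ → ℕ → ℝ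
  | 0 => fun n => if n = 0 then 1 else 0
  | k + 1 => seqConv f (seqConvPow f k)

/-- `f` is a probability mass function on ℕ. -/
def IsPMF (f : ℕ → ℝ) : Prop := (∀ n, 0 ≤ f n) ∧ ∑' n, f n = 1

/-- pmf of a geometric(p) random sum `X₁ + ⋯ + X_{N_p}` (N_p ≥ 1) of iid variables with pmf f. -/
def geomCompound (p : ℝ) (f : ℕ → ℝ) : ℕ → ℝ :=
  fun n => ∑' k : ℕ, p * (1 - p) ^ k * seqConvPow f (k + 1) n

/-- A distribution on ℕ is geometrically infinitely divisible. -/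
def GID (q : ℕ → ℝ) : Prop :=
  ∀ p ∈ Set.Ioo (0 : ℝ) 1, ∃ f : ℕ → ℝ, IsPMF f ∧ ∀ n, q n = geomCompound p f n

/-- Convolution of measures on ℝ (distribution of the sum of independent rv's). -/
def mconv (μ ν : Measure ℝ) : Measure ℝ :=
  Measure.map (fun x : ℝ × ℝ => x.1 + x.2) (μ.prod ν)

/-- k-fold convolution power of a measure on ℝ. -/
def mpow (μ : Measure ℝ) : ℕ → Measure ℝ
  | 0 => Measure.dirac 0
  | k + 1 => mconv μ (mpow μ k)

/-- A distribution on [0,∞) is geometrically infinitely divisible: for every p ∈ (0,1)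
it is the distribution of a geometric(p) random sum of iid nonnegative rv's. -/
def GIDM (μ : Measure ℝ) : Prop :=
  ∀ p ∈ Set.Ioo (0 : ℝ) 1, ∃ ν : Measure ℝ, IsProbabilityMeasure ν ∧ ν (Set.Iio 0) = 0 ∧
    μ = Measure.sum (fun k : ℕ => (ENNReal.ofReal (p * (1 - p) ^ k)) • mpow ν (k + 1))

/-- Laplace–Stieltjes transform of a measure on ℝ. -/
def lst (μ : Measure ℝ) (u : ℝ) : ℝ := ∫ x, Real.exp (-(u * x)) ∂μ

/-- pmf of the λ-Poisson mixture with mixing distribution μ. -/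
def pmix (l : ℝ) (μ : Measure ℝ) (n : ℕ) : ℝ :=
  ∫ x, (l * x) ^ n * Real.exp (-(l * x)) / (n.factorial : ℝ) ∂μ

/-- μ is λ-quasi-geometrically infinitely divisible: its λ-Poisson mixture is g.i.d. -/
def QGID (l : ℝ) (μ : Measure ℝ) : Prop := GID (pmix l μ)

/-- K(τ) = -φ'(τ)/φ(τ)² where φ is the LST of μ. -/
def Kfun (μ : Measure ℝ) (τ : ℝ) : ℝ := -(deriv (lst μ) τ) / (lst μ τ) ^ 2

/-- G is a probability generating function (on |z| ≤ 1). -/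
def IsPGF (G : ℝ → ℝ) : Prop :=
  ∃ f : ℕ → ℝ, IsPMF f ∧ ∀ z : ℝ, |z| ≤ 1 → G z = ∑' n, f n * z ^ n

end

noncomputable section Infra

open PowerSeries

lemma seqConv_coeff (f g : ℕ → ℝ) (n : ℕ) :
    seqConv f g n = PowerSeries.coeff n (PowerSeries.mk f * PowerSeries.mk g) := by
  rw [PowerSeries.coeff_mul, Finset.Nat.sum_antidiagonal_eq_sum_range_succ_mk]
  simp [seqConv]

lemma mk_seqConv (f g : ℕ → ℝ) :
    PowerSeries.mk (seqConv f g) = PowerSeries.mk f * PowerSeries.mk g := by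
  ext n
  rw [PowerSeries.coeff_mk, seqConv_coeff]

lemma mk_seqConvPow (f : ℕ → ℝ) (k : ℕ) :
    PowerSeries.mk (seqConvPow f k) = (PowerSeries.mk f) ^ k := by
  induction k with
  | zero =>
    ext n
    simp [seqConvPow, PowerSeries.coeff_one]
  | succ k ih =>
    show PowerSeries.mk (seqConv f (seqConvPow f k)) = _
    rw [mk_seqConv, ih, pow_succ]
    ring

lemma seqConv_comm (f g : ℕ → ℝ) (n : ℕ) : seqConv f g n = seqConv g f n := by
  rw [seqConv_coeff, seqConv_coeff, mul_comm]

lemma seqConv_nonneg {f g : ℕ → ℝ} (hf : ∀ n, 0 ≤ f n) (hg : ∀ n, 0 ≤ g n) (n : ℕ) :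
    0 ≤ seqConv f g n :=
  Finset.sum_nonneg fun k _ => mul_nonneg (hf k) (hg _)

lemma seqConvPow_nonneg {f : ℕ → ℝ} (hf : ∀ n, 0 ≤ f n) (k n : ℕ) :
    0 ≤ seqConvPow f k n := by
  induction k generalizing n with
  | zero => simp only [seqConvPow]; positivity
  | succ k ih => exact seqConv_nonneg hf (fun m => ih m) n

lemma pmf_summable {f : ℕ → ℝ} (hf : IsPMF f) : Summable f := by
  by_contra h
  have h2 := hf.2
  rw [tsum_eq_zero_of_not_summable h] at h2
  exact one_ne_zero h2.symm

lemma seqConvPow_le_one {f : ℕ → ℝ} (hf : IsPMF f) (k n : ℕ) :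
    seqConvPow f k n ≤ 1 := by
  induction k generalizing n with
  | zero => simp only [seqConvPow]; split <;> norm_num
  | succ k ih =>
    show seqConv f (seqConvPow f k) n ≤ 1
    calc seqConv f (seqConvPow f k) n
        ≤ ∑ j ∈ Finset.range (n + 1), f j := by
          apply Finset.sum_le_sum
          intro j _
          exact mul_le_of_le_one_right (hf.1 j) (ih _)
      _ ≤ ∑' j, f j := Summable.sum_le_tsum _ (fun j _ => hf.1 j) (pmf_summable hf)
      _ = 1 := hf.2

lemma summable_norm_of_pmf {f : ℕ → ℝ} (hf : IsPMF f) : Summable fun n => ‖f n‖ := by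
  have := pmf_summable hf
  simpa [Real.norm_eq_abs, abs_of_nonneg (hf.1 _)] using this

lemma seqConv_summable {f g : ℕ → ℝ} (hf : IsPMF f) (hg : IsPMF g) :
    Summable (seqConv f g) := by
  have := summable_norm_sum_mul_range_of_summable_norm (summable_norm_of_pmf hf)
    (summable_norm_of_pmf hg)
  exact this.of_norm

lemma seqConv_tsum {f g : ℕ → ℝ} (hf : IsPMF f) (hg : IsPMF g) :
    ∑' n, seqConv f g n = 1 := by
  have := tsum_mul_tsum_eq_tsum_sum_range_of_summable_norm (f := f) (g := g)
    (summable_norm_of_pmf hf) (summable_norm_of_pmf hg)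
  rw [hf.2, hg.2] at this
  simpa [seqConv] using this.symm

lemma seqConvPow_pmf {f : ℕ → ℝ} (hf : IsPMF f) (k : ℕ) : IsPMF (seqConvPow f k) := by
  induction k with
  | zero =>
    constructor
    · exact seqConvPow_nonneg hf.1 0
    · simp only [seqConvPow]
      rw [tsum_eq_single 0] <;> simp
  | succ k ih =>
    refine ⟨seqConvPow_nonneg hf.1 _, ?_⟩
    exact seqConv_tsum hf ih

end Infra

noncomputable section Mix

lemma mk_delta : PowerSeries.mk (fun m => if m = 0 then (1:ℝ) else 0) = 1 := by
  ext n
  simp [PowerSeries.coeff_one]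

lemma seqConv_delta (f : ℕ → ℝ) (n : ℕ) :
    seqConv f (fun m => if m = 0 then (1:ℝ) else 0) n = f n := by
  rw [seqConv_coeff, mk_delta, mul_one, PowerSeries.coeff_mk]

lemma seqConv_smul_right (f g : ℕ → ℝ) (c : ℝ) (n : ℕ) :
    seqConv f (fun m => c * g m) n = c * seqConv f g n := by
  simp [seqConv, Finset.mul_sum, mul_left_comm]

lemma seqConv_add_right (f x y : ℕ → ℝ) (n : ℕ) :
    seqConv f (fun m => x m + y m) n = seqConv f x n + seqConv f y n := by
  simp [seqConv, mul_add, Finset.sum_add_distrib]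

lemma mix_summable {w f : ℕ → ℝ} (hw : Summable w) (hw0 : ∀ k, 0 ≤ w k) (hf : IsPMF f)
    (n : ℕ) : Summable (fun k => w k * seqConvPow f k n) :=
  Summable.of_nonneg_of_le (fun k => mul_nonneg (hw0 k) (seqConvPow_nonneg hf.1 k n))
    (fun k => mul_le_of_le_one_right (hw0 k) (seqConvPow_le_one hf k n)) hw

lemma mix_rec {w f : ℕ → ℝ} (hw : Summable w) (hw0 : ∀ k, 0 ≤ w k) (hf : IsPMF f) (n : ℕ) :
    ∑' k, w k * seqConvPow f k n
      = w 0 * (if n = 0 then 1 else 0)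
        + seqConv f (fun m => ∑' k, w (k + 1) * seqConvPow f k m) n := by
  have hw' : Summable (fun k => w (k + 1)) := (summable_nat_add_iff 1).2 hw
  have hw0' : ∀ k, 0 ≤ w (k + 1) := fun k => hw0 _
  rw [Summable.tsum_eq_zero_add (mix_summable hw hw0 hf n)]
  have h1 : w 0 * seqConvPow f 0 n = w 0 * (if n = 0 then 1 else 0) := by
    simp [seqConvPow]
  rw [h1]
  congr 1
  have step : ∀ k, w (k + 1) * seqConvPow f (k + 1) n
      = ∑ j ∈ Finset.range (n + 1), f j * (w (k + 1) * seqConvPow f k (n - j)) := by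
    intro k
    show w (k + 1) * seqConv f (seqConvPow f k) n = _
    rw [seqConv, Finset.mul_sum]
    apply Finset.sum_congr rfl
    intro j _
    ring
  calc ∑' k, w (k + 1) * seqConvPow f (k + 1) n
      = ∑' k, ∑ j ∈ Finset.range (n + 1), f j * (w (k + 1) * seqConvPow f k (n - j)) :=
        tsum_congr step
    _ = ∑ j ∈ Finset.range (n + 1), ∑' k, f j * (w (k + 1) * seqConvPow f k (n - j)) := by
        apply Summable.tsum_finsetSum
        intro j _
        exact ((mix_summable hw' hw0' hf (n - j)).mul_left (f j))
    _ = seqConv f (fun m => ∑' k, w (k + 1) * seqConvPow f k m) n := by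
        simp only [seqConv]
        apply Finset.sum_congr rfl
        intro j _
        rw [tsum_mul_left]

end Mix

noncomputable section GeomFixed

variable {t : ℝ} {f : ℕ → ℝ}

lemma geom_w_summable (ht : t ∈ Set.Ioo (0:ℝ) 1) :
    Summable (fun k => t * (1 - t) ^ k) := by
  obtain ⟨ht1, ht2⟩ := ht
  apply Summable.mul_left
  apply summable_geometric_of_lt_one (by linarith) (by linarith)

lemma geom_w_nonneg (ht : t ∈ Set.Ioo (0:ℝ) 1) : ∀ k, 0 ≤ t * (1 - t) ^ k := by
  intro k
  obtain ⟨ht1, ht2⟩ := ht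
  have h3 : (0:ℝ) ≤ 1 - t := by linarith
  positivity

lemma geomCompound_conv (ht : t ∈ Set.Ioo (0:ℝ) 1) (hf : IsPMF f) (n : ℕ) :
    geomCompound t f n
      = seqConv f (fun m => ∑' k, (t * (1 - t) ^ k) * seqConvPow f k m) n := by
  have hw := geom_w_summable ht
  have hw0 := geom_w_nonneg ht
  unfold geomCompound
  have step : ∀ k, t * (1 - t) ^ k * seqConvPow f (k + 1) n
      = ∑ j ∈ Finset.range (n + 1), f j * (t * (1 - t) ^ k * seqConvPow f k (n - j)) := by
    intro k
    show t * (1 - t) ^ k * seqConv f (seqConvPow f k) n = _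
    rw [seqConv, Finset.mul_sum]
    apply Finset.sum_congr rfl
    intro j _
    ring
  calc ∑' k, t * (1 - t) ^ k * seqConvPow f (k + 1) n
      = ∑' k, ∑ j ∈ Finset.range (n + 1), f j * (t * (1 - t) ^ k * seqConvPow f k (n - j)) :=
        tsum_congr step
    _ = ∑ j ∈ Finset.range (n + 1), ∑' k, f j * (t * (1 - t) ^ k * seqConvPow f k (n - j)) := by
        apply Summable.tsum_finsetSum
        intro j _
        exact ((mix_summable hw hw0 hf (n - j)).mul_left (f j))
    _ = seqConv f (fun m => ∑' k, (t * (1 - t) ^ k) * seqConvPow f k m) n := by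
        simp only [seqConv]
        apply Finset.sum_congr rfl
        intro j _
        rw [tsum_mul_left]

lemma geomCompound_fixed (ht : t ∈ Set.Ioo (0:ℝ) 1) (hf : IsPMF f) (n : ℕ) :
    geomCompound t f n = t * f n + (1 - t) * seqConv f (geomCompound t f) n := by
  have hw := geom_w_summable ht
  have hw0 := geom_w_nonneg ht
  have hM : (fun m => ∑' k, (t * (1 - t) ^ k) * seqConvPow f k m)
      = fun m => t * (if m = 0 then 1 else 0) + (1 - t) * geomCompound t f m := by
    funext m
    rw [mix_rec hw hw0 hf m]
    congr 1
    · norm_num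
    · have hshift : (fun m' => ∑' k, (t * (1 - t) ^ (k + 1)) * seqConvPow f k m')
          = fun m' => (1 - t) * ∑' k, (t * (1 - t) ^ k) * seqConvPow f k m' := by
        funext m'
        rw [← tsum_mul_left]
        apply tsum_congr
        intro k
        ring
      rw [hshift, seqConv_smul_right]
      rw [← geomCompound_conv ht hf m]
  rw [geomCompound_conv ht hf n, hM, seqConv_add_right]
  have e1 : seqConv f (fun m => t * (if m = 0 then 1 else 0)) n = t * f n := by
    have := seqConv_smul_right f (fun m => if m = 0 then (1:ℝ) else 0) t n
    rw [this, seqConv_delta]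
  have e2 : seqConv f (fun m => (1 - t) * geomCompound t f m) n
      = (1 - t) * seqConv f (geomCompound t f) n := seqConv_smul_right _ _ _ _
  rw [e1, e2]

end GeomFixed

noncomputable section Mix2

lemma mix_pmf {w q : ℕ → ℝ} (hw : Summable w) (hw0 : ∀ k, 0 ≤ w k)
    (hwsum : ∑' k, w k = 1) (hq : IsPMF q) :
    IsPMF (fun n => ∑' k, w k * seqConvPow q k n) := by
  have hrow : ∀ k, Summable (fun n => w k * seqConvPow q k n) :=
    fun k => (pmf_summable (seqConvPow_pmf hq k)).mul_left _
  have hrowsum : ∀ k, ∑' n, w k * seqConvPow q k n = w k := by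
    intro k
    rw [tsum_mul_left, (seqConvPow_pmf hq k).2, mul_one]
  have hF : Summable (Function.uncurry fun k n => w k * seqConvPow q k n) := by
    rw [summable_prod_of_nonneg]
    · exact ⟨fun k => hrow k, hw.congr fun k => (hrowsum k).symm⟩
    · intro x
      exact mul_nonneg (hw0 x.1) (seqConvPow_nonneg hq.1 x.1 x.2)
  constructor
  · intro n
    exact tsum_nonneg fun k => mul_nonneg (hw0 k) (seqConvPow_nonneg hq.1 k n)
  · rw [Summable.tsum_comm hF]
    simp only [hrowsum]
    exact hwsum

lemma coeff_C_mul' (a : ℝ) (φ : PowerSeries ℝ) (n : ℕ) :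
    PowerSeries.coeff n (PowerSeries.C a * φ) = a * PowerSeries.coeff n φ := by
  rw [← PowerSeries.smul_eq_C_mul, PowerSeries.coeff_smul, smul_eq_mul]

lemma ne_zero_of_coeff0 {φ : PowerSeries ℝ} (h : PowerSeries.coeff 0 φ ≠ 0) : φ ≠ 0 :=
  fun h0 => h (by rw [h0]; simp)

end Mix2

noncomputable section Fwd

open PowerSeries

set_option maxHeartbeats 1000000 in
lemma fwd_nonneg (p : ℕ → ℝ) (hp : IsPMF p) (h0 : 0 < p 0) (h1 : p 0 < 1)
    (a : ℕ → ℝ)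
    (ha : ∀ n : ℕ, p (n + 1) = ∑ k ∈ Finset.range (n + 1), p k * a (n - k))
    (hg : GID p) : ∀ n, 0 ≤ a n := by
  classical
  set b : ℕ → ℝ := fun n => if n = 0 then (p 0)⁻¹ else -a (n-1) * (p 0)⁻¹ with hb_def
  have hB : PowerSeries.mk p * PowerSeries.mk b = 1 := by
    ext n
    rw [← seqConv_coeff, PowerSeries.coeff_one]
    cases n with
    | zero =>
      simp only [seqConv, Finset.range_one, Finset.sum_singleton, Nat.sub_self, hb_def,
        if_pos rfl, if_true]
      simp [h0.ne']
    | succ m =>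
      rw [if_neg (Nat.succ_ne_zero m)]
      rw [seqConv, Finset.sum_range_succ]
      have hco : ∀ k ∈ Finset.range (m+1), p k * b (m+1-k) = -(p k * a (m-k)) * (p 0)⁻¹ := by
        intro k hk
        have hk' := Finset.mem_range.mp hk
        have h2 : m + 1 - k = (m - k) + 1 := by omega
        rw [h2]
        simp only [hb_def, Nat.add_sub_cancel, if_neg (Nat.succ_ne_zero _)]
        ring
      rw [Finset.sum_congr rfl hco]
      have h3 : ∑ k ∈ Finset.range (m+1), -(p k * a (m-k)) * (p 0)⁻¹
          = -(p (m+1)) * (p 0)⁻¹ := by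
        rw [← Finset.sum_mul]
        congr 1
        rw [ha m, Finset.sum_neg_distrib]
      rw [h3]
      simp only [Nat.sub_self, hb_def, if_pos rfl]
      ring
  intro n
  induction n using Nat.strong_induction_on with
  | _ n IH =>
  have key : ∀ ε > 0, -a n ≤ ε := by
    intro ε hε
    set S := ∑ j ∈ Finset.range n, a j with hS_def
    have hS0 : 0 ≤ S := Finset.sum_nonneg fun j hj => IH j (Finset.mem_range.mp hj)
    set K := (1 - p 0) * S / (p 0 * p 0) with hK_def
    have hK0 : 0 ≤ K := by
      apply div_nonneg (mul_nonneg (by linarith) hS0) (by positivity)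
    set t := min (1/2 : ℝ) (ε / (K + 1)) with ht_def
    have htpos : 0 < t := lt_min (by norm_num) (by positivity)
    have ht : t ∈ Set.Ioo (0:ℝ) 1 :=
      ⟨htpos, lt_of_le_of_lt (min_le_left _ _) (by norm_num)⟩
    obtain ⟨f, hf, heq⟩ := hg t ht
    have hGP : geomCompound t f = p := funext fun m => (heq m).symm
    have hFP_pt : ∀ m, p m = t * f m + (1-t) * seqConv f p m := by
      intro m
      conv_lhs => rw [← hGP]
      rw [geomCompound_fixed ht hf m, hGP]
    have hFPS : PowerSeries.mk p
        = PowerSeries.C t * PowerSeries.mk f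
          + PowerSeries.C (1-t) * (PowerSeries.mk f * PowerSeries.mk p) := by
      ext m
      rw [map_add, coeff_C_mul', coeff_C_mul', ← seqConv_coeff, PowerSeries.coeff_mk,
        PowerSeries.coeff_mk]
      exact hFP_pt m
    have hKey : (1 : PowerSeries ℝ)
        = PowerSeries.C t * (PowerSeries.mk b * PowerSeries.mk f)
          + PowerSeries.C (1-t) * PowerSeries.mk f := by
      linear_combination (PowerSeries.mk b) * hFPS
        + (PowerSeries.C (1-t) * PowerSeries.mk f - 1) * hB
    have hC : ∀ m, m ≠ 0 → 0 = t * seqConv b f m + (1-t) * f m := by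
      intro m hm
      have h := congrArg (PowerSeries.coeff m) hKey
      rwa [PowerSeries.coeff_one, if_neg hm, map_add, coeff_C_mul', coeff_C_mul',
        ← seqConv_coeff, PowerSeries.coeff_mk] at h
    -- scalar facts about f
    have hf00 : p 0 = f 0 * (t + (1-t) * p 0) := by
      have h2 := hFP_pt 0
      norm_num [seqConv] at h2
      linear_combination h2
    have hd_pos : 0 < t + (1-t) * p 0 := by nlinarith [ht.1, ht.2, h0]
    have hd_le : t + (1-t) * p 0 ≤ 1 := by nlinarith [ht.1, ht.2, h1]
    have hf0_nonneg := hf.1 0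
    have hf0p : p 0 ≤ f 0 := by nlinarith [hf00, hd_le, hf0_nonneg]
    have hf0pos : 0 < f 0 := by nlinarith [hf00, hd_pos, h0]
    have hfsmall : ∀ m, m ≠ 0 → f m * p 0 ≤ t * (1 - p 0) := by
      intro m hm
      have hsub := Summable.sum_le_tsum ({0, m} : Finset ℕ) (fun i _ => hf.1 i) (pmf_summable hf)
      rw [hf.2, Finset.sum_pair (by omega : (0:ℕ) ≠ m)] at hsub
      nlinarith [hf00, h0, ht.1, ht.2, h1, hsub, sq_nonneg (t * (1 - p 0))]
    -- the coefficient identity at n + 1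
    set T := ∑ j ∈ Finset.range n, a j * f (n - j) with hT_def
    have hconv : seqConv b f (n+1)
        = -T * (p 0)⁻¹ - a n * f 0 * (p 0)⁻¹ + f (n+1) * (p 0)⁻¹ := by
      rw [seqConv, Finset.sum_range_succ']
      have hco : ∀ k ∈ Finset.range (n+1),
          b (k+1) * f (n+1-(k+1)) = -(a k * f (n-k)) * (p 0)⁻¹ := by
        intro k hk
        have h2 : n + 1 - (k + 1) = n - k := by omega
        rw [h2]
        simp only [hb_def, Nat.add_sub_cancel, if_neg (Nat.succ_ne_zero _)]
        ring
      rw [Finset.sum_congr rfl hco, Finset.sum_range_succ]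
      have h3 : ∑ k ∈ Finset.range n, -(a k * f (n-k)) * (p 0)⁻¹ = -T * (p 0)⁻¹ := by
        rw [← Finset.sum_mul, Finset.sum_neg_distrib, hT_def]
      rw [h3]
      simp only [Nat.sub_self, Nat.sub_zero, hb_def, if_pos rfl]
      ring
    have hCn := hC (n+1) (Nat.succ_ne_zero n)
    have hconv2 : seqConv b f (n+1) * p 0 = -T - a n * f 0 + f (n+1) := by
      rw [hconv]
      field_simp
    have hclean : t * (a n * f 0 + T) = t * f (n+1) + (1-t) * (f (n+1) * p 0) := by
      have e := congrArg (fun x : ℝ => x * p 0) hCn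
      simp only [zero_mul, add_mul, mul_assoc] at e
      rw [hconv2] at e
      linear_combination e
    have hnn : 0 ≤ t * (a n * f 0 + T) := by
      rw [hclean]
      have h7 : (0:ℝ) ≤ 1 - t := by linarith [ht.2]
      exact add_nonneg (mul_nonneg htpos.le (hf.1 _))
        (mul_nonneg h7 (mul_nonneg (hf.1 _) h0.le))
    have h_anf0 : -(a n * f 0) ≤ T := by
      by_contra hcon
      push_neg at hcon
      nlinarith [mul_pos htpos (show (0:ℝ) < -(a n * f 0 + T) by linarith)]
    -- bound T
    have hT_le : T * p 0 ≤ t * (1 - p 0) * S := by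
      have : ∀ j ∈ Finset.range n, a j * f (n - j) * p 0 ≤ a j * (t * (1 - p 0)) := by
        intro j hj
        have hj' := Finset.mem_range.mp hj
        have hne : n - j ≠ 0 := by omega
        have := hfsmall (n - j) hne
        have haj := IH j hj'
        nlinarith
      calc T * p 0 = ∑ j ∈ Finset.range n, a j * f (n - j) * p 0 := by
            rw [hT_def, Finset.sum_mul]
        _ ≤ ∑ j ∈ Finset.range n, a j * (t * (1 - p 0)) := Finset.sum_le_sum this
        _ = t * (1 - p 0) * S := by rw [← Finset.sum_mul, hS_def]; ring
    have hT0 : 0 ≤ T := Finset.sum_nonneg fun j hj =>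
      mul_nonneg (IH j (Finset.mem_range.mp hj)) (hf.1 _)
    -- conclude
    rcases le_or_gt (-a n) 0 with hcase | hcase
    · linarith
    · have e1 : -a n * p 0 ≤ T := by nlinarith [h_anf0, hf0p, hcase]
      have e2 : T ≤ t * K * p 0 := by
        have h8 : t * K * p 0 = t * (1 - p 0) * S / p 0 := by
          rw [hK_def]
          field_simp
        rw [h8, le_div_iff₀ h0]
        linarith [hT_le]
      have e3 : -a n ≤ t * K :=
        le_of_mul_le_mul_right (by linarith : -a n * p 0 ≤ t * K * p 0) h0
      have e4 : t * K ≤ ε := by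
        have h5 : t ≤ ε / (K + 1) := min_le_right _ _
        calc t * K ≤ ε / (K + 1) * K := mul_le_mul_of_nonneg_right h5 hK0
          _ ≤ ε := by
            rw [div_mul_eq_mul_div, div_le_iff₀ (by positivity : (0:ℝ) < K + 1)]
            nlinarith
      linarith
  have h6 : -a n ≤ 0 := le_of_forall_pos_le_add (fun ε hε => by
    simpa using key ε hε)
  linarith

end Fwd

noncomputable section Bwd

open PowerSeries

set_option maxHeartbeats 1600000 in
lemma bwd_gid (p : ℕ → ℝ) (hp : IsPMF p) (h0 : 0 < p 0) (h1 : p 0 < 1)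
    (a : ℕ → ℝ)
    (ha : ∀ n : ℕ, p (n + 1) = ∑ k ∈ Finset.range (n + 1), p k * a (n - k))
    (han : ∀ n, 0 ≤ a n) : GID p := by
  classical
  have hpsum := pmf_summable hp
  have hp1sum : Summable (fun n => p (n + 1)) := (summable_nat_add_iff 1).2 hpsum
  have hasum : Summable a := by
    apply Summable.of_nonneg_of_le han (fun n => ?_) (hp1sum.div_const (p 0))
    rw [le_div_iff₀ h0, ha n]
    have h2 : p 0 * a (n - 0) ≤ ∑ k ∈ Finset.range (n + 1), p k * a (n - k) :=
      Finset.single_le_sum (f := fun k => p k * a (n - k))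
        (fun k _ => mul_nonneg (hp.1 k) (han _)) (Finset.mem_range.mpr (Nat.succ_pos n))
    simpa [mul_comm] using h2
  have hpnorm : Summable (fun n => ‖p n‖) := by
    simpa [abs_of_nonneg (hp.1 _)] using hpsum
  have hannorm : Summable (fun n => ‖a n‖) := by
    simpa [abs_of_nonneg (han _)] using hasum
  have hsum_a : ∑' n, a n = 1 - p 0 := by
    have h2 : ∑' n, p (n + 1) = 1 - p 0 := by
      have h3 := Summable.tsum_eq_zero_add hpsum
      rw [hp.2] at h3
      linarith
    have h4 : ∑' n, a n = ∑' n, p (n + 1) := by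
      have h5 := tsum_mul_tsum_eq_tsum_sum_range_of_summable_norm hpnorm hannorm
      rw [hp.2, one_mul] at h5
      rw [h5]
      exact tsum_congr fun n => (ha n).symm
    linarith
  intro t ht
  obtain ⟨ht1, ht2⟩ := ht
  have h1p0 : 0 < 1 - p 0 := by linarith
  set q : ℕ → ℝ := fun n => if n = 0 then 0 else a (n - 1) / (1 - p 0) with hq_def
  have hqsucc : ∀ n : ℕ, q (n + 1) = a n / (1 - p 0) := by
    intro n
    simp [hq_def]
  have hqsum : Summable q := by
    rw [← summable_nat_add_iff 1]
    exact (hasum.div_const _).congr fun n => (hqsucc n).symm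
  have hq : IsPMF q := by
    refine ⟨fun n => ?_, ?_⟩
    · rcases Nat.eq_zero_or_pos n with h | h
      · simp [hq_def, h]
      · obtain ⟨m, rfl⟩ := Nat.exists_eq_succ_of_ne_zero (Nat.pos_iff_ne_zero.mp h)
        rw [hqsucc]
        exact div_nonneg (han m) h1p0.le
    · rw [Summable.tsum_eq_zero_add hqsum]
      simp only [hqsucc]
      have h6 : q 0 = 0 := by simp [hq_def]
      rw [h6, zero_add, tsum_div_const, hsum_a]
      field_simp
  set c' := t * (1 - p 0) / p 0 with hc_def
  have hc_pos : 0 < c' := by positivity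
  have h1c : 0 < 1 + c' := by linarith
  set r0 := 1 / (1 + c') with hr_def
  set s := c' / (1 + c') with hs_def
  have hr_pos : 0 < r0 := by positivity
  have hs_nonneg : 0 ≤ s := by positivity
  have hs_lt : s < 1 := by rw [hs_def, div_lt_one h1c]; linarith
  have hrs : r0 = 1 - s := by rw [hr_def, hs_def]; field_simp; ring
  set w : ℕ → ℝ := fun k => r0 * s ^ k with hw_def
  have hw_sum : Summable w := (summable_geometric_of_lt_one hs_nonneg hs_lt).mul_left r0
  have hw0 : ∀ k, 0 ≤ w k := fun k => mul_nonneg hr_pos.le (pow_nonneg hs_nonneg k)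
  have hw_tsum : ∑' k, w k = 1 := by
    rw [hw_def]
    rw [tsum_mul_left, tsum_geometric_of_lt_one hs_nonneg hs_lt, hrs]
    rw [mul_inv_cancel₀ (by linarith : (1:ℝ) - s ≠ 0)]
  set f : ℕ → ℝ := fun n => ∑' k, w k * seqConvPow q k n with hf_def
  have hfPMF : IsPMF f := mix_pmf hw_sum hw0 hw_tsum hq
  have hR2 : ∀ n, f n = r0 * (if n = 0 then 1 else 0) + s * seqConv q f n := by
    intro n
    have h7 := mix_rec hw_sum hw0 hq n
    have hinner : (fun m => ∑' k, w (k + 1) * seqConvPow q k m) = fun m => s * f m := by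
      funext m
      show (∑' k, w (k + 1) * seqConvPow q k m) = s * ∑' k, w k * seqConvPow q k m
      rw [← tsum_mul_left]
      apply tsum_congr
      intro k
      show r0 * s ^ (k + 1) * seqConvPow q k m = s * (r0 * s ^ k * seqConvPow q k m)
      ring
    show (∑' k, w k * seqConvPow q k n) = (r0 * if n = 0 then 1 else 0) + s * seqConv q f n
    rw [h7, hinner, seqConv_smul_right]
    have hw00 : w 0 = r0 := by show r0 * s ^ 0 = r0; ring
    rw [hw00]
  have hR2PS : (1 - C s * PowerSeries.mk q) * PowerSeries.mk f = C r0 := by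
    ext n
    rw [sub_mul, one_mul, mul_assoc, map_sub, coeff_C_mul', ← seqConv_coeff,
      PowerSeries.coeff_mk, PowerSeries.coeff_C]
    have h8 := hR2 n
    by_cases hn : n = 0
    · subst hn
      norm_num at h8 ⊢
      linarith
    · rw [if_neg hn]
      rw [if_neg hn, mul_zero, zero_add] at h8
      linarith
  have hR1PS : (1 - C (1 - p 0) * PowerSeries.mk q) * PowerSeries.mk p = C (p 0) := by
    ext n
    rw [sub_mul, one_mul, mul_assoc, map_sub, coeff_C_mul', ← seqConv_coeff,
      PowerSeries.coeff_mk, PowerSeries.coeff_C]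
    cases n with
    | zero => simp [seqConv, hq_def]
    | succ m =>
      rw [if_neg (Nat.succ_ne_zero m), seqConv_comm q p (m + 1), seqConv,
        Finset.sum_range_succ]
      have hco : ∀ k ∈ Finset.range (m + 1),
          p k * q (m + 1 - k) = p k * a (m - k) / (1 - p 0) := by
        intro k hk
        have hk' := Finset.mem_range.mp hk
        have h9 : m + 1 - k = (m - k) + 1 := by omega
        rw [h9, hqsucc]
        ring
      rw [Finset.sum_congr rfl hco]
      have h10 : q (m + 1 - (m + 1)) = 0 := by simp [hq_def]
      rw [h10, mul_zero, add_zero, ← Finset.sum_div, ← ha m]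
      field_simp
      simp
  have hc1 : r0 * (t + (1 - t) * p 0) = p 0 := by
    have h1c' : (1 + c') * p 0 = t + (1 - t) * p 0 := by
      rw [hc_def]
      field_simp
      ring
    rw [hr_def, one_div, ← h1c', inv_mul_cancel_left₀ (ne_of_gt h1c)]
  have hcp : c' * p 0 = t * (1 - p 0) := by
    rw [hc_def]
    field_simp
  have hc2 : s * p 0 = t * (1 - p 0) * r0 := by
    rw [hs_def, hr_def, div_mul_eq_mul_div, hcp]
    ring
  have hq0 : q 0 = 0 := by simp [hq_def]
  have hD1ne : (1 - C (1 - p 0) * PowerSeries.mk q) ≠ 0 := by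
    apply ne_zero_of_coeff0
    rw [map_sub, PowerSeries.coeff_one, coeff_C_mul', PowerSeries.coeff_mk, hq0]
    norm_num
  have hD2ne : (1 - C s * PowerSeries.mk q) ≠ 0 := by
    apply ne_zero_of_coeff0
    rw [map_sub, PowerSeries.coeff_one, coeff_C_mul', PowerSeries.coeff_mk, hq0]
    norm_num
  have hC1 : C r0 * (C t + C (1 - t) * C (p 0)) = C (p 0) := by
    rw [← map_mul, ← map_add, ← map_mul, hc1]
  have hC2 : C s * C (p 0) = C t * C (1 - p 0) * C r0 := by
    rw [← map_mul, ← map_mul, ← map_mul, hc2]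
  have hPS : PowerSeries.mk p
      = C t * PowerSeries.mk f + C (1 - t) * (PowerSeries.mk f * PowerSeries.mk p) := by
    apply mul_left_cancel₀ (mul_ne_zero hD2ne hD1ne)
    linear_combination
      ((1 - C s * PowerSeries.mk q)
        - C (1 - t) * (1 - C s * PowerSeries.mk q) * PowerSeries.mk f) * hR1PS
      + (-(C t) * (1 - C (1 - p 0) * PowerSeries.mk q)
          - C (1 - t) * C (p 0)) * hR2PS
      - hC1 - (PowerSeries.mk q) * hC2
  have hGfix := geomCompound_fixed ⟨ht1, ht2⟩ hfPMF
  have hGPS : PowerSeries.mk (geomCompound t f)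
      = C t * PowerSeries.mk f
        + C (1 - t) * (PowerSeries.mk f * PowerSeries.mk (geomCompound t f)) := by
    ext n
    rw [map_add, coeff_C_mul', coeff_C_mul', ← seqConv_coeff, PowerSeries.coeff_mk,
      PowerSeries.coeff_mk]
    exact hGfix n
  have hf0le : f 0 ≤ 1 := by
    have h11 := Summable.le_tsum (pmf_summable hfPMF) 0 (fun i _ => hfPMF.1 i)
    rwa [hfPMF.2] at h11
  have hfactor_ne : (1 - C (1 - t) * PowerSeries.mk f) ≠ 0 := by
    apply ne_zero_of_coeff0
    rw [map_sub, PowerSeries.coeff_one, coeff_C_mul', PowerSeries.coeff_mk, if_pos rfl]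
    have hf00 := hfPMF.1 0
    have hb1 : (1 - t) * f 0 ≤ (1 - t) * 1 :=
      mul_le_mul_of_nonneg_left hf0le (by linarith : (0:ℝ) ≤ 1 - t)
    intro hcon
    nlinarith
  have hzero : (1 - C (1 - t) * PowerSeries.mk f)
      * (PowerSeries.mk (geomCompound t f) - PowerSeries.mk p) = 0 := by
    linear_combination hGPS - hPS
  have hsub := (mul_eq_zero.mp hzero).resolve_left hfactor_ne
  rw [sub_eq_zero] at hsub
  refine ⟨f, hfPMF, fun n => ?_⟩
  have h12 := congrArg (PowerSeries.coeff n) hsub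
  rw [PowerSeries.coeff_mk, PowerSeries.coeff_mk] at h12
  exact h12.symm

end Bwd

/-- A distribution (p_n) on ℕ with 0 < p₀ < 1 is g.i.d. iff the
sequence (a_n) determined by `p_{n+1} = Σ_{k=0}^n p_k a_{n-k}` is nonnegative;
in that case Σ a_n < ∞. -/
theorem stmt14 (p : ℕ → ℝ) (hp : IsPMF p) (h0 : 0 < p 0) (h1 : p 0 < 1)
    (a : ℕ → ℝ)
    (ha : ∀ n : ℕ, p (n + 1) = ∑ k ∈ Finset.range (n + 1), p k * a (n - k)) :
    (GID p ↔ ∀ n, 0 ≤ a n) ∧ (GID p → Summable a) := by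
  refine ⟨⟨fun hg => fwd_nonneg p hp h0 h1 a ha hg,
    fun han => bwd_gid p hp h0 h1 a ha han⟩, fun hg => ?_⟩
  have han := fwd_nonneg p hp h0 h1 a ha hg
  have hpsum := pmf_summable hp
  apply Summable.of_nonneg_of_le han (fun n => ?_)
    (((summable_nat_add_iff 1).2 hpsum).div_const (p 0))
  rw [le_div_iff₀ h0, ha n]
  have h2 : p 0 * a (n - 0) ≤ ∑ k ∈ Finset.range (n + 1), p k * a (n - k) :=
    Finset.single_le_sum (f := fun k => p k * a (n - k))
      (fun k _ => mul_nonneg (hp.1 k) (han _)) (Finset.mem_range.mpr (Nat.succ_pos n))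
  simpa [mul_comm] using h2
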